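/- Let n ≥ 3 and |Ω| < ∞. For any measurable f on Ω, ∫₀^{|Ω|} r^{−2/n'} (∫₀^r (f*)²(ρ) dρ) dr ≤ c(n)·‖f‖²_{L^{n,1}(Ω)}, where n' = n/(n−1) and ‖f‖_{L^{n,1}(Ω)} = ∫₀^{|Ω|} s^{1/n − 1} f*(s) ds. -/

import Mathlib

open MeasureTheory

/-- The decreasing rearrangement of a measurable function `φ` with respect to the
measure `m`. -/
noncomputable def rearr {α : Type*} [MeasurableSpace α] (m : Measure α)
    (φ : α → ℝ) (s : ℝ) : ℝ :=
  sInf {t : ℝ | 0 ≤ t ∧ m {x | t < |φ x|} ≤ ENNReal.ofReal s}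

/-!
Write `g = f*`, which is nonnegative and nonincreasing on `(0, ∞)`, and `a = 2/n' > 1`.
By Fubini the left side is
`∫₀^M g(ρ)² ∫_ρ^M r^{-a} dr dρ ≤ (a - 1)⁻¹ ∫₀^M ρ^{1-a} g(ρ)² dρ`.
Since `1 - a = 1/n + (1/n - 1)`, the integrand is `(ρ^{1/n} g(ρ)) · (ρ^{1/n-1} g(ρ))`,
and monotonicity of `g` gives
`ρ^{1/n} g(ρ) ≤ 2 ∫_{ρ/2}^ρ s^{1/n-1} g(s) ds ≤ 2 ‖f‖_{L^{n,1}}`.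
-/

open Set Filter Topology ENNReal

section Rearrangement

variable {α : Type*} [MeasurableSpace α] (m : Measure α)

lemma rearr_nonneg (φ : α → ℝ) : 0 ≤ rearr m φ :=
  fun _ => Real.sInf_nonneg fun _ ht => ht.1

lemma nonempty_setOf_measure_abs_gt_le [IsFiniteMeasure m] {φ : α → ℝ} (hφ : Measurable φ)
    {s : ℝ} (hs : 0 < s) :
    {t : ℝ | 0 ≤ t ∧ m {x | t < |φ x|} ≤ ENNReal.ofReal s}.Nonempty := by
  have hlim : Tendsto (fun t : ℝ => m {x | t < |φ x|}) atTop (𝓝 0) := by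
    have h := tendsto_measure_iInter_atTop (μ := m) (s := fun t : ℝ => {x | t < |φ x|})
      (fun _ => (measurableSet_lt measurable_const hφ.abs).nullMeasurableSet)
      (fun _ _ htt' _ hx => htt'.trans_lt hx) ⟨0, measure_ne_top m _⟩
    rwa [iInter_eq_empty_iff.2 fun x => ⟨|φ x|, lt_irrefl |φ x|⟩, measure_empty] at h
  obtain ⟨t, ht, ht₀⟩ :=
    ((hlim.eventually_lt_const (ofReal_pos.2 hs)).and (eventually_ge_atTop 0)).exists
  exact ⟨t, ht₀, ht.le⟩

lemma rearr_antitoneOn [IsFiniteMeasure m] {φ : α → ℝ} (hφ : Measurable φ) :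
    AntitoneOn (rearr m φ) (Ioi 0) :=
  fun _ hs _ _ hss' => csInf_le_csInf ⟨0, fun _ ht => ht.1⟩
    (nonempty_setOf_measure_abs_gt_le m hφ hs)
    fun _ ht => ⟨ht.1, ht.2.trans (ofReal_le_ofReal hss')⟩

end Rearrangement

theorem lintegral_Ioo_mul_lintegral_Ioo_swap {a b : ℝ} {w h : ℝ → ℝ≥0∞}
    (hw : AEMeasurable w (volume.restrict (Ioo a b)))
    (hh : AEMeasurable h (volume.restrict (Ioo a b))) :
    ∫⁻ r in Ioo a b, w r * ∫⁻ ρ in Ioo a r, h ρ =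
      ∫⁻ ρ in Ioo a b, h ρ * ∫⁻ r in Ioo ρ b, w r := by
  set F : ℝ → ℝ → ℝ≥0∞ := fun r ρ => {p : ℝ × ℝ | p.2 < p.1}.indicator
    (fun p => w p.1 * h p.2) (r, ρ) with hF
  have hFm : AEMeasurable (Function.uncurry F)
      ((volume.restrict (Ioo a b)).prod (volume.restrict (Ioo a b))) :=
    (hw.comp_fst.mul hh.comp_snd).indicator (measurableSet_lt measurable_snd measurable_fst)
  calc ∫⁻ r in Ioo a b, w r * ∫⁻ ρ in Ioo a r, h ρ
      = ∫⁻ r in Ioo a b, ∫⁻ ρ in Ioo a b, F r ρ := by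
        refine setLIntegral_congr_fun measurableSet_Ioo fun r hr => ?_
        have hFr : ∀ ρ, F r ρ = (Iio r).indicator (fun ρ => w r * h ρ) ρ := fun ρ => by
          simp only [hF, indicator_apply, mem_ofPred_eq, mem_Iio]
        simp only [hFr]
        rw [lintegral_indicator measurableSet_Iio, Measure.restrict_restrict measurableSet_Iio,
          Iio_inter_Ioo, min_eq_left hr.2.le,
          lintegral_const_mul'' _ (hh.mono_measure (Measure.restrict_mono
            (Ioo_subset_Ioo_right hr.2.le) le_rfl))]
    _ = ∫⁻ ρ in Ioo a b, ∫⁻ r in Ioo a b, F r ρ := lintegral_lintegral_swap hFm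
    _ = ∫⁻ ρ in Ioo a b, h ρ * ∫⁻ r in Ioo ρ b, w r := by
        refine setLIntegral_congr_fun measurableSet_Ioo fun ρ hρ => ?_
        have hFρ : ∀ r, F r ρ = (Ioi ρ).indicator (fun r => w r * h ρ) r := fun r => by
          simp only [hF, indicator_apply, mem_ofPred_eq, mem_Ioi]
        simp only [hFρ]
        rw [lintegral_indicator measurableSet_Ioi, Measure.restrict_restrict measurableSet_Ioi,
          Ioi_inter_Ioo, max_eq_left hρ.1.le,
          lintegral_mul_const'' _ (hw.mono_measure (Measure.restrict_mono
            (Ioo_subset_Ioo_left hρ.1.le) le_rfl)), mul_comm]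

theorem lintegral_Ioi_rpow_neg {a ρ : ℝ} (ha : 1 < a) (hρ : 0 < ρ) :
    ∫⁻ r in Ioi ρ, ENNReal.ofReal (r ^ (-a)) = ENNReal.ofReal (ρ ^ (1 - a) / (a - 1)) := by
  have hnonneg : 0 ≤ᵐ[volume.restrict (Ioi ρ)] fun r : ℝ => r ^ (-a) := by
    filter_upwards [self_mem_ae_restrict measurableSet_Ioi] with r hr
    exact Real.rpow_nonneg (hρ.trans hr).le _
  rw [← ofReal_integral_eq_lintegral_ofReal
    (integrableOn_Ioi_rpow_of_lt (by linarith) hρ) hnonneg,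
    integral_Ioi_rpow_of_lt (by linarith) hρ]
  congr 1
  rw [show -a + 1 = 1 - a by ring, div_eq_div_iff (by linarith) (by linarith)]
  ring

theorem ofReal_rpow_mul_le_two_mul_setLIntegral {g : ℝ → ℝ} {p M ρ : ℝ} (hp : p ≤ 1)
    (hg₀ : 0 ≤ g) (hg : AntitoneOn g (Ioi 0)) (hρ : 0 < ρ) (hρM : ρ ≤ M) :
    ENNReal.ofReal (ρ ^ p * g ρ) ≤
      2 * ∫⁻ s in Ioo 0 M, ENNReal.ofReal (s ^ (p - 1) * g s) := by
  have hsplit : ρ ^ p * g ρ = 2 * (ρ ^ (p - 1) * g ρ * (ρ - ρ / 2)) := by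
    rw [Real.rpow_sub_one hρ.ne']
    field_simp
    ring
  calc ENNReal.ofReal (ρ ^ p * g ρ)
      = 2 * ∫⁻ _ in Ioo (ρ / 2) ρ, ENNReal.ofReal (ρ ^ (p - 1) * g ρ) := by
        rw [setLIntegral_const, Real.volume_Ioo, hsplit, ofReal_mul zero_le_two,
          ofReal_mul (mul_nonneg (Real.rpow_nonneg hρ.le _) (hg₀ ρ)), ofReal_ofNat]
    _ ≤ 2 * ∫⁻ s in Ioo (ρ / 2) ρ, ENNReal.ofReal (s ^ (p - 1) * g s) := by
        gcongr 2 * ?_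
        refine setLIntegral_mono' measurableSet_Ioo fun s hs => ofReal_le_ofReal ?_
        have hs₀ : 0 < s := (half_pos hρ).trans hs.1
        exact mul_le_mul (Real.rpow_le_rpow_of_nonpos hs₀ hs.2.le (by linarith))
          (hg hs₀ hρ hs.2.le) (hg₀ ρ) (Real.rpow_nonneg hs₀.le _)
    _ ≤ 2 * ∫⁻ s in Ioo 0 M, ENNReal.ofReal (s ^ (p - 1) * g s) := by
        gcongr 2 * ?_
        exact lintegral_mono_set (Ioo_subset_Ioo (half_pos hρ).le hρM)

theorem lintegral_rpow_mul_lintegral_sq_le {g : ℝ → ℝ} {p M : ℝ} (hp : p < 1 / 2)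
    (hg₀ : 0 ≤ g) (hg : AntitoneOn g (Ioi 0)) :
    ∫⁻ r in Ioo 0 M, ENNReal.ofReal (r ^ (-(2 * (1 - p)))) *
        ∫⁻ ρ in Ioo 0 r, ENNReal.ofReal (g ρ ^ 2) ≤
      ENNReal.ofReal (2 / (1 - 2 * p)) *
        (∫⁻ s in Ioo 0 M, ENNReal.ofReal (s ^ (p - 1) * g s)) ^ 2 := by
  set N := ∫⁻ s in Ioo 0 M, ENNReal.ofReal (s ^ (p - 1) * g s)
  have hgm : AEMeasurable g (volume.restrict (Ioo 0 M)) :=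
    aemeasurable_restrict_of_antitoneOn measurableSet_Ioo (hg.mono Ioo_subset_Ioi_self)
  have hc : ENNReal.ofReal (2 / (1 - 2 * p)) = 2 * ENNReal.ofReal (1 / (1 - 2 * p)) := by
    rw [← ofReal_ofNat 2, ← ofReal_mul zero_le_two, mul_one_div]
  have hpointwise : ∀ ρ ∈ Ioo 0 M,
      ENNReal.ofReal (g ρ ^ 2) * ∫⁻ r in Ioo ρ M, ENNReal.ofReal (r ^ (-(2 * (1 - p)))) ≤
        ENNReal.ofReal (2 / (1 - 2 * p)) * N * ENNReal.ofReal (ρ ^ (p - 1) * g ρ) := by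
    rintro ρ ⟨hρ₀, hρM⟩
    calc ENNReal.ofReal (g ρ ^ 2) * ∫⁻ r in Ioo ρ M, ENNReal.ofReal (r ^ (-(2 * (1 - p))))
        ≤ ENNReal.ofReal (g ρ ^ 2) *
            ENNReal.ofReal (ρ ^ (1 - 2 * (1 - p)) / (2 * (1 - p) - 1)) := by
          gcongr
          exact (lintegral_mono_set Ioo_subset_Ioi_self).trans_eq
            (lintegral_Ioi_rpow_neg (by linarith) hρ₀)
      _ = ENNReal.ofReal (1 / (1 - 2 * p)) *
            (ENNReal.ofReal (ρ ^ p * g ρ) * ENNReal.ofReal (ρ ^ (p - 1) * g ρ)) := by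
          have hsplit : g ρ ^ 2 * (ρ ^ (1 - 2 * (1 - p)) / (2 * (1 - p) - 1)) =
              1 / (1 - 2 * p) * (ρ ^ p * g ρ * (ρ ^ (p - 1) * g ρ)) := by
            rw [show 1 - 2 * (1 - p) = p + (p - 1) by ring, Real.rpow_add hρ₀,
              show 2 * (1 - p) - 1 = 1 - 2 * p by ring]
            ring
          rw [← ofReal_mul (sq_nonneg _), hsplit, ofReal_mul (by rw [one_div_nonneg]; linarith),
            ofReal_mul (mul_nonneg (Real.rpow_nonneg hρ₀.le _) (hg₀ ρ))]
      _ ≤ ENNReal.ofReal (1 / (1 - 2 * p)) * (2 * N * ENNReal.ofReal (ρ ^ (p - 1) * g ρ)) := by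
          gcongr
          exact ofReal_rpow_mul_le_two_mul_setLIntegral (by linarith) hg₀ hg hρ₀ hρM.le
      _ = ENNReal.ofReal (2 / (1 - 2 * p)) * N * ENNReal.ofReal (ρ ^ (p - 1) * g ρ) := by
          rw [hc]
          ring
  calc ∫⁻ r in Ioo 0 M, ENNReal.ofReal (r ^ (-(2 * (1 - p)))) *
        ∫⁻ ρ in Ioo 0 r, ENNReal.ofReal (g ρ ^ 2)
      = ∫⁻ ρ in Ioo 0 M, ENNReal.ofReal (g ρ ^ 2) *
          ∫⁻ r in Ioo ρ M, ENNReal.ofReal (r ^ (-(2 * (1 - p)))) :=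
        lintegral_Ioo_mul_lintegral_Ioo_swap (by fun_prop) (hgm.pow_const 2).ennreal_ofReal
    _ ≤ ∫⁻ ρ in Ioo 0 M,
          ENNReal.ofReal (2 / (1 - 2 * p)) * N * ENNReal.ofReal (ρ ^ (p - 1) * g ρ) :=
        setLIntegral_mono' measurableSet_Ioo hpointwise
    _ = ENNReal.ofReal (2 / (1 - 2 * p)) * N ^ 2 := by
        rw [lintegral_const_mul'' _ (by fun_prop), mul_assoc, sq]

theorem stmt17 (n : ℕ) (hn : 3 ≤ n) :
    ∃ c : ℝ, 0 < c ∧ ∀ (Ω : Set (EuclideanSpace ℝ (Fin n))), MeasurableSet Ω →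
      volume Ω < ⊤ → ∀ f : EuclideanSpace ℝ (Fin n) → ℝ, Measurable f →
      (∫⁻ r in Set.Ioo (0:ℝ) (volume Ω).toReal,
          ENNReal.ofReal (r ^ (-(2 * ((n:ℝ) - 1) / n))) *
            ∫⁻ ρ in Set.Ioo (0:ℝ) r,
              ENNReal.ofReal ((rearr (volume.restrict Ω) f ρ) ^ 2)) ≤
        ENNReal.ofReal c *
          (∫⁻ s in Set.Ioo (0:ℝ) (volume Ω).toReal,
            ENNReal.ofReal (s ^ ((1:ℝ)/n - 1) * rearr (volume.restrict Ω) f s)) ^ 2 := by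
  have hp : (1 : ℝ) / n < 1 / 2 := by
    gcongr
    exact_mod_cast hn
  refine ⟨2 / (1 - 2 * (1 / n)), by apply div_pos two_pos; linarith, ?_⟩
  intro Ω _ hΩ f hf
  have : IsFiniteMeasure (volume.restrict Ω) := isFiniteMeasure_restrict.2 hΩ.ne
  rw [show 2 * ((n : ℝ) - 1) / n = 2 * (1 - 1 / n) by field_simp]
  exact lintegral_rpow_mul_lintegral_sq_le hp (rearr_nonneg _ f) (rearr_antitoneOn _ hf)
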